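/- Let F be a field with pairwise distinct ζ₁,...,ζ₆. Define g₅ on the free F-module on oriented inner edges by g₅(e_{ij}) = e_i* + ζ_j f_i* − e_j* − ζ_i f_j* (values in the free module with two basis vectors e_p*, f_p* per inner vertex p), and let g₄ be the map from Σ-quotient 4-simplex spaces to edges as in the deformation complex. Then for any 4-simplex u = {1,2,3,4,5} all of whose vertices and edges are inner, and any x ∈ E_u, g₅(g₄(x)) = 0. -/
import Mathlib


noncomputable section

variable (F : Type*) [Field F] (ζ : Fin 5 → F)

/-- `g₅(e_{ij}) = e_i* + ζ_j f_i* − e_j* − ζ_i f_j*`, in the free module with two basis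
vectors `e_p* = (false,p)`, `f_p* = (true,p)` per (inner) vertex `p`. -/
def g5edge (i j : Fin 5) : (Bool × Fin 5) → F :=
  (Pi.single (false, i) 1 : (Bool × Fin 5) → F) + ζ j • (Pi.single (true, i) 1 : (Bool × Fin 5) → F)
    - (Pi.single (false, j) 1 : (Bool × Fin 5) → F) - ζ i • (Pi.single (true, j) 1 : (Bool × Fin 5) → F)

/-- The composite `g₅ ∘ g₄` on the single 4-simplex `u = {1,…,5}` (all of whose vertices
and edges are inner): for a coefficient vector `x` (representing a class in
`E_u = F⁵/⟨(1,…,1),(ζ₁,…,ζ₅)⟩`), the sum over the ten triangles `pqr` of `u` (encoded by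
permutations `σ` with `σ0<σ1<σ2`, `σ3<σ4`) of `sgn(σ)·y_{pqr}·g₅(e_{st})`. -/
def g5g4 (x : Fin 5 → F) : (Bool × Fin 5) → F :=
  ∑ σ : Equiv.Perm (Fin 5),
    if σ 0 < σ 1 ∧ σ 1 < σ 2 ∧ σ 3 < σ 4 then
      ((Equiv.Perm.sign σ : ℤ) : F) •
        (((ζ (σ 1) - ζ (σ 2)) * x (σ 0) + (ζ (σ 2) - ζ (σ 0)) * x (σ 1)
            + (ζ (σ 0) - ζ (σ 1)) * x (σ 2)) • g5edge F ζ (σ 3) (σ 4))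
    else 0

set_option linter.unusedVariables false

def mkP (f g : Fin 5 → Fin 5) (h₁ : Function.LeftInverse g f := by decide)
    (h₂ : Function.RightInverse g f := by decide) : Equiv.Perm (Fin 5) := ⟨f, g, h₁, h₂⟩

def S : Finset (Equiv.Perm (Fin 5)) :=
  { mkP ![0,1,2,3,4] ![0,1,2,3,4],
    mkP ![0,1,3,2,4] ![0,1,3,2,4],
    mkP ![0,1,4,2,3] ![0,1,3,4,2],
    mkP ![0,2,3,1,4] ![0,3,1,2,4],
    mkP ![0,2,4,1,3] ![0,3,1,4,2],
    mkP ![0,3,4,1,2] ![0,3,4,1,2],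
    mkP ![1,2,3,0,4] ![3,0,1,2,4],
    mkP ![1,2,4,0,3] ![3,0,1,4,2],
    mkP ![1,3,4,0,2] ![3,0,4,1,2],
    mkP ![2,3,4,0,1] ![3,4,0,1,2] }

set_option maxRecDepth 40000 in
set_option maxHeartbeats 2000000 in
/-- `g₅(g₄(x)) = 0` for every `x ∈ E_u` (Theorem 3 of the paper, verified on a single
4-simplex all of whose vertices and edges are inner). -/
theorem g5_g4_eq_zero (hζ : Function.Injective ζ) (x : Fin 5 → F) :
    g5g4 F ζ x = 0 := by
  have hmem : ∀ σ : Equiv.Perm (Fin 5),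
      (σ 0 < σ 1 ∧ σ 1 < σ 2 ∧ σ 3 < σ 4) → σ ∈ S := by decide
  unfold g5g4
  rw [← Finset.sum_subset (Finset.subset_univ S) (by
    intro σ _ hσ
    split_ifs with h
    · exact absurd (hmem σ h) hσ
    · rfl)]
  have e1 : S = { mkP ![0,1,2,3,4] ![0,1,2,3,4],
    mkP ![0,1,3,2,4] ![0,1,3,2,4],
    mkP ![0,1,4,2,3] ![0,1,3,4,2],
    mkP ![0,2,3,1,4] ![0,3,1,2,4],
    mkP ![0,2,4,1,3] ![0,3,1,4,2],
    mkP ![0,3,4,1,2] ![0,3,4,1,2],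
    mkP ![1,2,3,0,4] ![3,0,1,2,4],
    mkP ![1,2,4,0,3] ![3,0,1,4,2],
    mkP ![1,3,4,0,2] ![3,0,4,1,2],
    mkP ![2,3,4,0,1] ![3,4,0,1,2] } := rfl
  rw [e1, Finset.sum_insert (by decide), Finset.sum_insert (by decide),
    Finset.sum_insert (by decide), Finset.sum_insert (by decide),
    Finset.sum_insert (by decide), Finset.sum_insert (by decide),
    Finset.sum_insert (by decide), Finset.sum_insert (by decide),
    Finset.sum_insert (by decide), Finset.sum_singleton]
  rw [show Equiv.Perm.sign (mkP ![0,1,2,3,4] ![0,1,2,3,4]) = 1 from by decide,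
    show Equiv.Perm.sign (mkP ![0,1,3,2,4] ![0,1,3,2,4]) = -1 from by decide,
    show Equiv.Perm.sign (mkP ![0,1,4,2,3] ![0,1,3,4,2]) = 1 from by decide,
    show Equiv.Perm.sign (mkP ![0,2,3,1,4] ![0,3,1,2,4]) = 1 from by decide,
    show Equiv.Perm.sign (mkP ![0,2,4,1,3] ![0,3,1,4,2]) = -1 from by decide,
    show Equiv.Perm.sign (mkP ![0,3,4,1,2] ![0,3,4,1,2]) = 1 from by decide,
    show Equiv.Perm.sign (mkP ![1,2,3,0,4] ![3,0,1,2,4]) = -1 from by decide,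
    show Equiv.Perm.sign (mkP ![1,2,4,0,3] ![3,0,1,4,2]) = 1 from by decide,
    show Equiv.Perm.sign (mkP ![1,3,4,0,2] ![3,0,4,1,2]) = -1 from by decide,
    show Equiv.Perm.sign (mkP ![2,3,4,0,1] ![3,4,0,1,2]) = 1 from by decide]
  funext b
  obtain ⟨c, p⟩ := b
  simp only [mkP, Equiv.coe_fn_mk, Matrix.cons_val_zero, Matrix.cons_val_one, Matrix.head_cons,
    Matrix.cons_val_two, Matrix.tail_cons, Matrix.cons_val_three, Matrix.cons_val_four,
    if_pos, g5edge]
  have hc : ∀ (P : Prop) [Decidable P] (h : P) (a b : F), (if P then a else b) = a := fun P _ h a b => if_pos h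
  rw [if_pos (by decide), if_pos (by decide), if_pos (by decide), if_pos (by decide),
    if_pos (by decide), if_pos (by decide), if_pos (by decide), if_pos (by decide),
    if_pos (by decide), if_pos (by decide)]
  simp only [Pi.zero_apply, Pi.add_apply, Pi.sub_apply, Pi.smul_apply, smul_eq_mul,
    Pi.single_apply, Units.val_one, Units.val_neg, Int.cast_one, Int.cast_neg, Int.cast_ofNat]
  fin_cases c <;> fin_cases p <;>
    · simp only [Prod.mk.injEq, Bool.false_eq_true, Bool.true_eq_false, false_and, if_false,
        true_and, Fin.reduceEq, if_true, reduceIte]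
      ring


end
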